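/- Let G be a 3-partite undirected graph with parts A = {a₁,…,aₙ}, B = {b₁,…,bₙ}, C = {c₁,…,cₙ} and edge set E (every edge of G joins vertices from two different parts). Construct a labeled digraph H over the alphabet {a, b} with vertex set A ∪ B ∪ C ∪ A' ∪ {u}, where A' = {a₁',…,aₙ'} and u are fresh, and with the following labeled edges: (u, a₁) and (a_i, a_{i+1}) for 1 ≤ i ≤ n−1, each labeled a; (a_i, b_j) labeled a for every edge {a_i, b_j} ∈ E; (b_i, c_j) labeled b for every edge {b_i, c_j} ∈ E; (c_i, a_j') labeled b for every edge {c_i, a_j} ∈ E; and (a_{i+1}', a_i') for 1 ≤ i ≤ n−1, each labeled b. Then there is a walk from u to a₁' in H whose label contains equally many occurrences of a and of b if and only if G contains a triangle, i.e. there exist i, j, l such that {a_i, b_j}, {b_j, c_l}, {c_l, a_i} are all edges of G. -/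

import Mathlib

/-!
A walk from `u` to `a₁'` can only climb the `A`-path from `u` to some `a_{k+1}`, take three edges
`a_{k+1} b_j`, `b_j c_l`, `c_l a'_{m+1}` of `G`, and descend the `A'`-path to `a₁'`. Its label is
therefore `a^{k+2} b^{m+2}`, which is balanced exactly when `k = m`, that is, when the three edges
close a triangle.
-/

/-- The alphabet {a, b}. -/
inductive Letter2 where
  | a : Letter2
  | b : Letter2
deriving DecidableEq, BEq

/-- A labeled walk in a `σ`-labeled digraph given by the edge relation `E`. -/
inductive LWalk {V σ : Type*} (E : V → σ → V → Prop) : V → List σ → V → Prop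
  | nil (v : V) : LWalk E v [] v
  | cons {u v w : V} {c : σ} {l : List σ} :
      E u c v → LWalk E v l w → LWalk E u (c :: l) w

/-- Vertices of the constructed graph `H`:
the copies `A`, `B`, `C` of the parts, the fresh copies `A' = {a₁',…,aₙ'}`,
and the fresh vertex `u`. -/
inductive Vtx (n : ℕ) where
  | vA : Fin n → Vtx n
  | vB : Fin n → Vtx n
  | vC : Fin n → Vtx n
  | vA' : Fin n → Vtx n
  | vu : Vtx n

/-- The labeled edges of `H`, where the tripartite graph `G` is given by the relations
`EAB`, `EBC`, `ECA` describing its edges between the respective parts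
(vertices are 0-indexed, so `a₁` is `Vtx.vA ⟨0, _⟩`). -/
def triEdge {n : ℕ} (EAB EBC ECA : Fin n → Fin n → Prop) :
    Vtx n → Letter2 → Vtx n → Prop := fun x c y =>
  (c = Letter2.a ∧
    ((∃ h : 0 < n, x = Vtx.vu ∧ y = Vtx.vA ⟨0, h⟩) ∨
     (∃ (i : ℕ) (h : i + 1 < n), x = Vtx.vA ⟨i, by omega⟩ ∧ y = Vtx.vA ⟨i + 1, h⟩) ∨
     (∃ i j : Fin n, EAB i j ∧ x = Vtx.vA i ∧ y = Vtx.vB j))) ∨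
  (c = Letter2.b ∧
    ((∃ i j : Fin n, EBC i j ∧ x = Vtx.vB i ∧ y = Vtx.vC j) ∨
     (∃ i j : Fin n, ECA i j ∧ x = Vtx.vC i ∧ y = Vtx.vA' j) ∨
     (∃ (i : ℕ) (h : i + 1 < n), x = Vtx.vA' ⟨i + 1, h⟩ ∧ y = Vtx.vA' ⟨i, by omega⟩)))

instance : LawfulBEq Letter2 where
  eq_of_beq {x y} h := by cases x <;> cases y <;> first | rfl | cases h
  rfl {x} := by cases x <;> rfl

theorem LWalk.append {V σ : Type*} {E : V → σ → V → Prop} {x y z : V} {w₁ w₂ : List σ}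
    (h₁ : LWalk E x w₁ y) (h₂ : LWalk E y w₂ z) : LWalk E x (w₁ ++ w₂) z := by
  induction h₁ with
  | nil => exact h₂
  | cons e _ ih => exact .cons e (ih h₂)

section TriangleReduction

variable {n : ℕ} (EAB EBC ECA : Fin n → Fin n → Prop)

def CountsToA₁' : Vtx n → List Letter2 → Prop
  | .vA' m, w => w.count .a = 0 ∧ w.count .b = m
  | .vC l, w => ∃ m, ECA l m ∧ w.count .a = 0 ∧ w.count .b = m + 1
  | .vB j, w => ∃ l m, EBC j l ∧ ECA l m ∧ w.count .a = 0 ∧ w.count .b = m + 2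
  | .vA i, w => ∃ k j l m, EAB k j ∧ EBC j l ∧ ECA l m ∧
      w.count .a + i = k + 1 ∧ w.count .b = m + 2
  | .vu, w => ∃ k j l m, EAB k j ∧ EBC j l ∧ ECA l m ∧
      w.count .a = k + 2 ∧ w.count .b = m + 2

variable {EAB EBC ECA}

theorem countsToA₁'_cons_of_triEdge {x y : Vtx n} {c : Letter2} {w : List Letter2}
    (e : triEdge EAB EBC ECA x c y) (hw : CountsToA₁' EAB EBC ECA y w) :
    CountsToA₁' EAB EBC ECA x (c :: w) := by
  revert hw
  rcases e with ⟨rfl, ⟨-, rfl, rfl⟩ | ⟨i, -, rfl, rfl⟩ | ⟨i, j, hij, rfl, rfl⟩⟩ |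
    ⟨rfl, ⟨j, l, hjl, rfl, rfl⟩ | ⟨l, m, hlm, rfl, rfl⟩ | ⟨m, -, rfl, rfl⟩⟩
  · rintro ⟨k, j, l, m, hkj, hjl, hlm, ha, hb⟩
    exact ⟨k, j, l, m, hkj, hjl, hlm, by simp at ha ⊢; omega, by simpa using hb⟩
  · rintro ⟨k, j, l, m, hkj, hjl, hlm, ha, hb⟩
    exact ⟨k, j, l, m, hkj, hjl, hlm, by simp at ha ⊢; omega, by simpa using hb⟩
  · rintro ⟨l, m, hjl, hlm, ha, hb⟩
    exact ⟨i, j, l, m, hij, hjl, hlm, by simp [ha]; omega, by simpa using hb⟩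
  · rintro ⟨m, hlm, ha, hb⟩
    exact ⟨l, m, hjl, hlm, by simpa using ha, by simp [hb]⟩
  · rintro ⟨ha, hb⟩
    exact ⟨m, hlm, by simpa using ha, by simp [hb]⟩
  · rintro ⟨ha, hb⟩
    exact ⟨by simpa using ha, by simp [hb]⟩

theorem countsToA₁'_of_lWalk (hn : 0 < n) {x : Vtx n} {w : List Letter2}
    (h : LWalk (triEdge EAB EBC ECA) x w (.vA' ⟨0, hn⟩)) : CountsToA₁' EAB EBC ECA x w := by
  generalize ht : Vtx.vA' ⟨0, hn⟩ = t at h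
  induction h with
  | nil => subst ht; simp [CountsToA₁']
  | cons e _ ih => exact countsToA₁'_cons_of_triEdge e (ih ht)

theorem lWalk_vu_vA (hn : 0 < n) (i : Fin n) :
    LWalk (triEdge EAB EBC ECA) .vu (List.replicate (i + 1) .a) (.vA i) := by
  obtain ⟨i, hi⟩ := i
  induction i with
  | zero => exact .cons (.inl ⟨rfl, .inl ⟨hn, rfl, rfl⟩⟩) (.nil _)
  | succ i ih =>
    rw [List.replicate_succ']
    exact (ih (by omega)).append (.cons (.inl ⟨rfl, .inr (.inl ⟨i, hi, rfl, rfl⟩)⟩) (.nil _))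

theorem lWalk_vA'_vA'_zero (hn : 0 < n) (i : Fin n) :
    LWalk (triEdge EAB EBC ECA) (.vA' i) (List.replicate i .b) (.vA' ⟨0, hn⟩) := by
  obtain ⟨i, hi⟩ := i
  induction i with
  | zero => exact .nil _
  | succ i ih => exact .cons (.inr ⟨rfl, .inr (.inr ⟨i, hi, rfl, rfl⟩)⟩) (ih (by omega))

theorem lWalk_vA_vA'_of_triangle {i j l : Fin n} (hij : EAB i j) (hjl : EBC j l)
    (hli : ECA l i) : LWalk (triEdge EAB EBC ECA) (.vA i) [.a, .b, .b] (.vA' i) :=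
  .cons (.inl ⟨rfl, .inr (.inr ⟨i, j, hij, rfl, rfl⟩)⟩) <|
    .cons (.inr ⟨rfl, .inl ⟨j, l, hjl, rfl, rfl⟩⟩) <|
      .cons (.inr ⟨rfl, .inr (.inl ⟨l, i, hli, rfl, rfl⟩)⟩) (.nil _)

end TriangleReduction

/-- There is a walk from `u` to `a₁'` in `H` whose label has equally many `a`s and `b`s
iff `G` has a triangle. -/
theorem stmt6 {n : ℕ} (hn : 0 < n) (EAB EBC ECA : Fin n → Fin n → Prop) :
    (∃ w : List Letter2, w.count Letter2.a = w.count Letter2.b ∧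
        LWalk (triEdge EAB EBC ECA) Vtx.vu w (Vtx.vA' ⟨0, hn⟩)) ↔
      ∃ i j l : Fin n, EAB i j ∧ EBC j l ∧ ECA l i := by
  constructor
  · rintro ⟨w, hab, hw⟩
    obtain ⟨k, j, l, m, hkj, hjl, hlm, ha, hb⟩ := countsToA₁'_of_lWalk hn hw
    obtain rfl : k = m := Fin.ext (by omega)
    exact ⟨k, j, l, hkj, hjl, hlm⟩
  · rintro ⟨i, j, l, hij, hjl, hli⟩
    refine ⟨List.replicate (i + 1) .a ++ [.a, .b, .b] ++ List.replicate i .b, ?_, ?_⟩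
    · simp [List.count_replicate]
    · exact ((lWalk_vu_vA hn i).append
        (lWalk_vA_vA'_of_triangle hij hjl hli)).append
        (lWalk_vA'_vA'_zero hn i)
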